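/- Let t = (t_{i,j,k})_{1 ≤ i < j < k ≤ n} be a family of integers such that the normal form map N_t : ℤ^n → G(t) is bijective. Then for all 1 ≤ i < j ≤ n there exist polynomials R_{i,j,k} ∈ ℚ[u, v] for j < k ≤ n such that R_{i,j,k}(u, v) ∈ ℤ for all u, v ∈ ℤ and, for all u, v ∈ ℤ, the equation a_j^u · a_i^v = a_i^v · a_j^u · a_{j+1}^{R_{i,j,j+1}(u,v)} ⋯ a_n^{R_{i,j,n}(u,v)} holds in G(t). -/

import Mathlib

/-!
Through the normal form bijection `N`, right multiplication by any `g ∈ G(t)` becomes a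
permutation `ρ g` (`rightMul`) of `ℤⁿ`. It is unitriangular: its `k`-th coordinate moves by an
amount that only depends on the coordinates below `k`, because `a_k` is central modulo the
subgroup `H (k + 1)` generated by `a_{k+1}, …, a_n`. Integer powers of a unitriangular polynomial
permutation are again polynomial, jointly in the exponent (by discrete integration, one coordinate
at a time). Downward induction on `k` then shows that every `ρ (a_k)` is polynomial: conjugation
by `a_k` sends `a_l`, `l > k`, to `a_l` times a product of powers of later generators, so
`ρ (a_k)` is a composite of powers of the `ρ (a_l)`, `l > k`, with polynomial exponents. Finally
the normal form of `a_j^u a_i^v` is `(ρ (a_i))^v ((ρ (a_j))^u 0)`, and since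
`a_j^u a_i^v ≡ a_i^v a_j^u` modulo `H (j + 1)`, its coordinates beyond `j` are the exponents
`R_{i,j,k}(u, v)`.
-/

namespace HallPoly

/-- The ordered product `g_1^{e_1} ⋯ g_n^{e_n}` taken in increasing order of indices. -/
def prodPow {Γ : Type*} [Group Γ] (n : ℕ) (g : Fin n → Γ) (e : Fin n → ℤ) : Γ :=
  ((List.finRange n).map fun k => g k ^ e k).prod

/-- The relators of the presented group `G(t)`:
`(a_i · a_j · a_{j+1}^{t_{i,j,j+1}} ⋯ a_n^{t_{i,j,n}})⁻¹ · (a_j · a_i)` for `1 ≤ i < j ≤ n`. -/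
def rels (n : ℕ) (t : Fin n → Fin n → Fin n → ℤ) : Set (FreeGroup (Fin n)) :=
  { r | ∃ i j : Fin n, i < j ∧
      r = (FreeGroup.of i * FreeGroup.of j *
            prodPow n FreeGroup.of (fun k => if j < k then t i j k else 0))⁻¹ *
          (FreeGroup.of j * FreeGroup.of i) }

/-- The presented group `G(t)` with generators `a_1, …, a_n` and relations
`a_j·a_i = a_i·a_j·a_{j+1}^{t_{i,j,j+1}} ⋯ a_n^{t_{i,j,n}}` for `1 ≤ i < j ≤ n`. -/
abbrev G (n : ℕ) (t : Fin n → Fin n → Fin n → ℤ) : Type := PresentedGroup (rels n t)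

/-- The generators `a_1, …, a_n` of `G(t)`. -/
def a (n : ℕ) (t : Fin n → Fin n → Fin n → ℤ) (i : Fin n) : G n t :=
  PresentedGroup.of i

/-- The normal form map `N_t : ℤⁿ → G(t)`, `x ↦ a_1^{x_1} ⋯ a_n^{x_n}`. -/
def N (n : ℕ) (t : Fin n → Fin n → Fin n → ℤ) (x : Fin n → ℤ) : G n t :=
  prodPow n (a n t) x

open MvPolynomial

theorem _root_.Polynomial.exists_eval_add_one_sub_eval (d : ℕ) :
    ∃ q : Polynomial ℚ, ∀ r, q.eval (r + 1) - q.eval r = r ^ d := by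
  refine ⟨((d : ℚ) + 1)⁻¹ • Polynomial.bernoulli (d + 1), fun r => ?_⟩
  have hd : (d : ℚ) + 1 ≠ 0 := by positivity
  simp only [Polynomial.eval_smul, smul_eq_mul, add_comm r, Polynomial.bernoulli_eval_one_add]
  field_simp
  push_cast
  ring

theorem _root_.MvPolynomial.exists_eval_add_single_sub_eval {σ : Type*} [DecidableEq σ] (i : σ)
    (P : MvPolynomial σ ℚ) :
    ∃ Q : MvPolynomial σ ℚ, ∀ x, eval (x + Pi.single i 1) Q - eval x Q = eval x P := by
  suffices ∀ d : ℕ, ∃ Q : MvPolynomial σ ℚ,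
      ∀ x, eval (x + Pi.single i 1) Q - eval x Q = eval x (P * X i ^ d) by
    simpa using this 0
  induction P using MvPolynomial.induction_on with
  | C c =>
    intro d
    obtain ⟨q, hq⟩ := Polynomial.exists_eval_add_one_sub_eval d
    have eval_q (y : σ → ℚ) : eval y (Polynomial.aeval (X i) q) = q.eval (y i) := by
      rw [← aeval_eq_eval, ← Polynomial.aeval_algHom_apply, aeval_X, Polynomial.coe_aeval_eq_eval]
    refine ⟨C c * Polynomial.aeval (X i) q, fun x => ?_⟩
    simp [eval_q, ← mul_sub, hq]
  | add P Q hP hQ =>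
    intro d
    obtain ⟨P', hP'⟩ := hP d
    obtain ⟨Q', hQ'⟩ := hQ d
    exact ⟨P' + Q', fun x => by rw [add_mul, map_add, map_add, map_add, ← hP', ← hQ']; ring⟩
  | mul_X P j hP =>
    intro d
    by_cases hj : j = i
    · subst hj
      obtain ⟨Q, hQ⟩ := hP (d + 1)
      exact ⟨Q, fun x => by rw [hQ]; simp only [eval_mul, eval_pow, eval_X]; ring⟩
    · obtain ⟨Q, hQ⟩ := hP d
      refine ⟨Q * X j, fun x => ?_⟩
      have : (x + Pi.single i 1 : σ → ℚ) j = x j := by simp [hj]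
      simp only [eval_mul, eval_X, this, eval_pow] at hQ ⊢
      rw [← sub_mul, hQ]
      ring

section PolynomialFunctions

variable {σ τ ι : Type*}

def IsPolyFun (f : (σ → ℤ) → ℤ) : Prop :=
  ∃ P : MvPolynomial σ ℚ, ∀ x, (f x : ℚ) = eval (Int.cast ∘ x) P

def IsPolyMap (F : (σ → ℤ) → ι → ℤ) : Prop :=
  ∀ k, IsPolyFun fun x => F x k

theorem isPolyFun_const (c : ℤ) : IsPolyFun fun _ : σ → ℤ => c :=
  ⟨C (c : ℚ), by simp⟩

theorem isPolyFun_apply (i : σ) : IsPolyFun fun x : σ → ℤ => x i :=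
  ⟨X i, by simp⟩

theorem IsPolyFun.congr {f g : (σ → ℤ) → ℤ} (hf : IsPolyFun f) (h : ∀ x, f x = g x) :
    IsPolyFun g :=
  funext h ▸ hf

theorem IsPolyFun.add {f g : (σ → ℤ) → ℤ} (hf : IsPolyFun f) (hg : IsPolyFun g) :
    IsPolyFun fun x => f x + g x := by
  obtain ⟨P, hP⟩ := hf
  obtain ⟨Q, hQ⟩ := hg
  exact ⟨P + Q, fun x => by simp [hP, hQ]⟩

theorem IsPolyFun.comp {f : (σ → ℤ) → ℤ} (hf : IsPolyFun f) {g : (τ → ℤ) → σ → ℤ}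
    (hg : IsPolyMap g) : IsPolyFun fun z => f (g z) := by
  obtain ⟨P, hP⟩ := hf
  choose Q hQ using hg
  refine ⟨bind₁ Q P, fun z => ?_⟩
  rw [hP, ← aeval_eq_eval, ← aeval_eq_eval, aeval_bind₁]
  congr 2
  funext s
  exact hQ s z

theorem isPolyMap_const (v : ι → ℤ) : IsPolyMap fun _ : σ → ℤ => v :=
  fun k => isPolyFun_const (v k)

theorem isPolyMap_id : IsPolyMap fun x : σ → ℤ => x :=
  isPolyFun_apply

theorem IsPolyMap.congr {F F' : (σ → ℤ) → ι → ℤ} (hF : IsPolyMap F) (h : ∀ x, F x = F' x) :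
    IsPolyMap F' :=
  funext h ▸ hF

theorem IsPolyMap.comp {F : (σ → ℤ) → ι → ℤ} (hF : IsPolyMap F) {g : (τ → ℤ) → σ → ℤ}
    (hg : IsPolyMap g) : IsPolyMap fun z => F (g z) :=
  fun k => (hF k).comp hg

theorem IsPolyFun.of_fwdDiff [DecidableEq σ] {f : (σ → ℤ) → ℤ} (i : σ)
    (hΔ : IsPolyFun (fwdDiff (Pi.single i 1) f))
    (h₀ : IsPolyFun fun z => f (Function.update z i 0)) : IsPolyFun f := by
  obtain ⟨P, hP⟩ := hΔ
  obtain ⟨P₀, hP₀⟩ := h₀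
  obtain ⟨Q, hQ⟩ := MvPolynomial.exists_eval_add_single_sub_eval i P
  have update_add (z : σ → ℤ) (v : ℤ) :
      Function.update z i (v + 1) = Function.update z i v + Pi.single i 1 := by
    ext j
    by_cases hj : j = i <;> simp [hj]
  have cast_add_single (z : σ → ℤ) :
      (Int.cast ∘ (z + Pi.single i 1) : σ → ℚ) = Int.cast ∘ z + Pi.single i 1 := by
    ext j
    by_cases hj : j = i <;> simp [hj]
  -- `Q` is a discrete antiderivative of the difference of `f`, so `f - Q` does not see `z i`
  have hstep (w : σ → ℤ) : (f (w + Pi.single i 1) : ℚ) - eval (Int.cast ∘ (w + Pi.single i 1)) Q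
      = f w - eval (Int.cast ∘ w) Q := by
    have := hP w
    rw [fwdDiff, Int.cast_sub, ← hQ] at this
    rw [cast_add_single]
    linarith
  have hconst (z : σ → ℤ) (v : ℤ) :
      (f (Function.update z i v) : ℚ) - eval (Int.cast ∘ Function.update z i v) Q
        = f (Function.update z i 0) - eval (Int.cast ∘ Function.update z i 0) Q := by
    induction v using Int.induction_on with
    | zero => rfl
    | succ v ih => rw [update_add, hstep, ih]
    | pred v ih => rw [← ih, ← hstep, ← update_add, sub_add_cancel]
  refine ⟨P₀ + Q - bind₁ (Function.update X i 0) Q, fun z => ?_⟩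
  have hbind : eval (Int.cast ∘ z) (bind₁ (Function.update X i 0) Q)
      = eval (Int.cast ∘ Function.update z i 0) Q := by
    rw [← aeval_eq_eval, ← aeval_eq_eval, aeval_bind₁]
    congr 2
    funext j
    by_cases hj : j = i <;> simp [hj]
  have := hconst z (z i)
  rw [Function.update_eq_self] at this
  rw [map_sub, map_add, hbind, ← hP₀]
  linarith

def IsUnitriangular [LT ι] (F : (ι → ℤ) → ι → ℤ) : Prop :=
  ∀ k x y, (∀ l < k, x l = y l) → F x k - x k = F y k - y k

theorem IsPolyMap.zpow_apply [LinearOrder ι] [WellFoundedLT ι] {F : Equiv.Perm (ι → ℤ)}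
    (hF : IsPolyMap F) (hFu : IsUnitriangular F) {s : (σ → ℤ) → ℤ} {x : (σ → ℤ) → ι → ℤ}
    (hs : IsPolyFun s) (hx : IsPolyMap x) : IsPolyMap fun z => (F ^ s z) (x z) := by
  classical
  suffices key : IsPolyMap fun z : Option ι → ℤ => (F ^ z none) (z ∘ some) from
    key.comp (g := fun z o => o.elim (s z) (x z)) (by rintro (_ | l); exacts [hs, hx l])
  intro k
  induction k using WellFoundedLT.induction with
  | _ k ih =>
  refine IsPolyFun.of_fwdDiff none ?_ (by simpa using isPolyFun_apply (some k))
  -- `F ^ (s + 1) = F * F ^ s` moves coordinate `k` by a polynomial in the coordinates below `k`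
  let below : (Option ι → ℤ) → ι → ℤ := fun z l => if l < k then (F ^ z none) (z ∘ some) l else 0
  have hbelow : IsPolyMap below := fun l => by
    by_cases hl : l < k
    · simpa [below, hl] using ih l hl
    · simpa [below, hl] using isPolyFun_const 0
  refine ((hF k).comp hbelow).congr fun z => ?_
  have hshift : (z + Pi.single none 1) ∘ some = z ∘ some := by ext; simp
  have := hFu k (below z) ((F ^ z none) (z ∘ some)) fun l hl => by simp [below, hl]
  simp only [below, lt_irrefl, if_false, sub_zero] at this
  simp only [fwdDiff, hshift, Pi.add_apply, Pi.single_eq_same, add_comm (z none), zpow_one_add,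
    Equiv.Perm.mul_apply]
  exact this

end PolynomialFunctions

theorem _root_.List.mem_take_finRange_iff {n m : ℕ} {k : Fin n} :
    k ∈ (List.finRange n).take m ↔ (k : ℕ) < m := by
  rw [List.mem_take_iff_idxOf_lt (List.mem_finRange k), List.idxOf_finRange]

theorem _root_.List.le_of_mem_drop_finRange {n m : ℕ} {k : Fin n}
    (hk : k ∈ (List.finRange n).drop m) : m ≤ (k : ℕ) :=
  not_lt.1 fun h => List.disjoint_take_drop (List.nodup_finRange n) le_rfl
    (List.mem_take_finRange_iff.2 h) hk

section Coordinates

variable {n : ℕ}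

def lowPart (m : ℕ) (x : Fin n → ℤ) : Fin n → ℤ := fun k => if (k : ℕ) < m then x k else 0

def highPart (m : ℕ) (x : Fin n → ℤ) : Fin n → ℤ := fun k => if m ≤ (k : ℕ) then x k else 0

theorem isPolyMap_highPart (m : ℕ) : IsPolyMap (highPart (n := n) m) := fun k => by
  by_cases h : m ≤ (k : ℕ)
  · simpa [highPart, h] using isPolyFun_apply k
  · simpa [highPart, h] using isPolyFun_const 0

theorem isPolyMap_update_lowPart (k : Fin n) :
    IsPolyMap fun x : Fin n → ℤ => Function.update (lowPart k x) k (x k + 1) := fun l => by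
  by_cases hl : l = k
  · subst hl
    simpa using (isPolyFun_apply l).add (isPolyFun_const 1)
  by_cases h : (l : ℕ) < k
  · simpa [lowPart, hl, h] using isPolyFun_apply l
  · simpa [lowPart, hl, h] using isPolyFun_const 0

variable {Γ Δ : Type*} [Group Γ] [Group Δ]

theorem prodPow_eq_lowPart_mul_highPart (g : Fin n → Γ) (m : ℕ) (x : Fin n → ℤ) :
    prodPow n g x = prodPow n g (lowPart m x) * prodPow n g (highPart m x) := by
  unfold prodPow
  rw [← List.take_append_drop m (List.finRange n)]
  simp only [List.map_append, List.prod_append]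
  have low_take : ((List.finRange n).take m).map (fun k => g k ^ lowPart m x k)
      = ((List.finRange n).take m).map fun k => g k ^ x k :=
    List.map_congr_left fun k hk => by simp [lowPart, List.mem_take_finRange_iff.1 hk]
  have low_drop : (((List.finRange n).drop m).map fun k => g k ^ lowPart m x k).prod = 1 :=
    List.prod_eq_one fun _ hy => by
      obtain ⟨k, hk, rfl⟩ := List.mem_map.1 hy
      simp [lowPart, (List.le_of_mem_drop_finRange hk).not_gt]
  have high_take : (((List.finRange n).take m).map fun k => g k ^ highPart m x k).prod = 1 :=
    List.prod_eq_one fun _ hy => by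
      obtain ⟨k, hk, rfl⟩ := List.mem_map.1 hy
      simp [highPart, List.mem_take_finRange_iff.1 hk]
  have high_drop : ((List.finRange n).drop m).map (fun k => g k ^ highPart m x k)
      = ((List.finRange n).drop m).map fun k => g k ^ x k :=
    List.map_congr_left fun k hk => by simp [highPart, List.le_of_mem_drop_finRange hk]
  rw [low_take, low_drop, high_take, high_drop, mul_one, one_mul]

theorem prodPow_zero (g : Fin n → Γ) : prodPow n g 0 = 1 :=
  List.prod_eq_one fun _ hy => by
    obtain ⟨k, -, rfl⟩ := List.mem_map.1 hy
    simp

theorem prodPow_single (g : Fin n → Γ) (k : Fin n) (s : ℤ) :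
    prodPow n g (Pi.single k s) = g k ^ s := by
  rw [prodPow, List.prod_map_eq_pow_single k _ fun l hl _ => by simp [hl],
    List.count_eq_one_of_mem (List.nodup_finRange n) (List.mem_finRange k)]
  simp

theorem map_prodPow {F : Type*} [FunLike F Γ Δ] [MonoidHomClass F Γ Δ] (φ : F)
    (g : Fin n → Γ) (x : Fin n → ℤ) : φ (prodPow n g x) = prodPow n (fun k => φ (g k)) x := by
  simp [prodPow, map_list_prod, Function.comp_def]

end Coordinates

section Presentation

variable {n : ℕ} {t : Fin n → Fin n → Fin n → ℤ}

theorem N_zero : N n t 0 = 1 := prodPow_zero _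

theorem N_single (k : Fin n) (s : ℤ) : N n t (Pi.single k s) = a n t k ^ s := prodPow_single _ _ _

theorem N_eq_lowPart_mul_highPart (m : ℕ) (x : Fin n → ℤ) :
    N n t x = N n t (lowPart m x) * N n t (highPart m x) :=
  prodPow_eq_lowPart_mul_highPart _ m x

theorem N_lowPart_add_highPart (m : ℕ) (x y : Fin n → ℤ) :
    N n t (lowPart m x + highPart m y) = N n t (lowPart m x) * N n t (highPart m y) := by
  rw [N_eq_lowPart_mul_highPart m]
  congr 2 <;> ext k <;> simp only [lowPart, highPart, Pi.add_apply] <;> split_ifs <;> omega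

theorem N_eq_lowPart_mul_zpow_mul_highPart (k : Fin n) (x : Fin n → ℤ) :
    N n t x = N n t (lowPart k x) * a n t k ^ x k * N n t (highPart (k + 1) x) := by
  have hlow : lowPart k (lowPart (k + 1) x) = lowPart k x := by
    ext l
    simp only [lowPart]
    split_ifs <;> omega
  have hhigh : highPart k (lowPart (k + 1) x) = Pi.single k (x k) := by
    ext l
    by_cases h : l = k
    · subst h; simp [lowPart, highPart]
    · simp only [lowPart, highPart, Pi.single_apply, h, if_false]
      split_ifs <;> omega
  rw [N_eq_lowPart_mul_highPart (k + 1), N_eq_lowPart_mul_highPart (t := t) k (lowPart _ x),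
    hlow, hhigh, N_single]

theorem N_single_add_single_add_highPart {i j : Fin n} (hij : i < j) (u v : ℤ) (r : Fin n → ℤ) :
    N n t (Pi.single i v + Pi.single j u + highPart (j + 1) r)
      = a n t i ^ v * a n t j ^ u * N n t (highPart (j + 1) r) := by
  have hij' := Fin.lt_def.1 hij
  have hlow : lowPart j (Pi.single i v + Pi.single j u + highPart (j + 1) r) = Pi.single i v := by
    ext l
    simp only [lowPart, highPart, Pi.add_apply, Pi.single_apply, Fin.ext_iff]
    split_ifs <;> omega
  have hhigh : highPart (j + 1) (Pi.single i v + Pi.single j u + highPart (j + 1) r)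
      = highPart (j + 1) r := by
    ext l
    simp only [highPart, Pi.add_apply, Pi.single_apply, Fin.ext_iff]
    split_ifs <;> omega
  rw [N_eq_lowPart_mul_zpow_mul_highPart (t := t) j
    ((Pi.single i v : Fin n → ℤ) + (Pi.single j u : Fin n → ℤ) + highPart (j + 1) r),
    hlow, hhigh, N_single]
  simp [highPart, hij.ne]

def tail (t : Fin n → Fin n → Fin n → ℤ) (i j : Fin n) : Fin n → ℤ :=
  fun k => if j < k then t i j k else 0

theorem a_mul_a {i j : Fin n} (h : i < j) :
    a n t j * a n t i = a n t i * a n t j * N n t (tail t i j) := by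
  have := PresentedGroup.mk_eq_mk_of_inv_mul_mem (rels := rels n t) ⟨i, j, h, rfl⟩
  simp only [map_mul, map_prodPow] at this
  exact this.symm

theorem inv_a_mul_a_mul_a {i j : Fin n} (h : i < j) :
    (a n t i)⁻¹ * a n t j * a n t i = a n t j * N n t (tail t i j) := by
  rw [mul_assoc, a_mul_a h]
  group

theorem a_mul_a_mul_inv_a {i j : Fin n} (h : i < j) :
    a n t i * a n t j * (a n t i)⁻¹
      = a n t j * (a n t i * (N n t (tail t i j))⁻¹ * (a n t i)⁻¹) := by
  calc a n t i * a n t j * (a n t i)⁻¹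
      = a n t i * a n t j * N n t (tail t i j) * (N n t (tail t i j))⁻¹ * (a n t i)⁻¹ := by
        group
    _ = a n t j * (a n t i * (N n t (tail t i j))⁻¹ * (a n t i)⁻¹) := by rw [← a_mul_a h]; group

end Presentation

theorem _root_.Subgroup.mem_normalizer_closure_of_conj_mem {Γ : Type*} [Group Γ] {s : Set Γ}
    {g : Γ}
    (h : ∀ x ∈ s, g * x * g⁻¹ ∈ Subgroup.closure s ∧ g⁻¹ * x * g ∈ Subgroup.closure s) :
    g ∈ Subgroup.normalizer (Subgroup.closure s : Set Γ) := by
  rw [Subgroup.mem_normalizer_iff_map_conj_eq]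
  refine le_antisymm (Subgroup.map_le_iff_le_comap.2 ((Subgroup.closure_le _).2 fun x hx => ?_))
    ((Subgroup.closure_le _).2 fun x hx => ?_)
  · exact (h x hx).1
  · exact ⟨g⁻¹ * x * g, (h x hx).2, by simp [mul_assoc]⟩

section Filtration

variable (n : ℕ) (t : Fin n → Fin n → Fin n → ℤ)

def H (m : ℕ) : Subgroup (G n t) :=
  Subgroup.closure (a n t '' {k | m ≤ (k : ℕ)})

variable {n t}

theorem a_mem_H {m : ℕ} {k : Fin n} (hk : m ≤ (k : ℕ)) : a n t k ∈ H n t m :=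
  Subgroup.subset_closure ⟨k, hk, rfl⟩

theorem H_anti {m m' : ℕ} (h : m ≤ m') : H n t m' ≤ H n t m :=
  Subgroup.closure_mono (Set.image_mono fun _ (hk : m' ≤ _) => h.trans hk)

theorem H_eq_bot {m : ℕ} (h : n ≤ m) : H n t m = ⊥ := by
  rw [H, Subgroup.closure_eq_bot_iff]
  rintro _ ⟨k, hk, rfl⟩
  exact absurd (k.isLt.trans_le (h.trans hk)) (lt_irrefl _)

theorem H_eq_zpowers_sup (k : Fin n) : H n t k = Subgroup.zpowers (a n t k) ⊔ H n t (k + 1) := by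
  have : a n t '' {l | (k : ℕ) ≤ l} = {a n t k} ∪ a n t '' {l | (k : ℕ) + 1 ≤ l} := by
    rw [← Set.image_singleton, ← Set.image_union]
    congr 1
    ext l
    simp only [Set.mem_ofPred_eq, Set.mem_union, Set.mem_singleton_iff, Fin.ext_iff]
    omega
  rw [H, this, Subgroup.closure_union, ← Subgroup.zpowers_eq_closure, H]

theorem N_highPart_mem_H (m : ℕ) (x : Fin n → ℤ) : N n t (highPart m x) ∈ H n t m :=
  Subgroup.list_prod_mem _ fun _ hy => by
    obtain ⟨k, -, rfl⟩ := List.mem_map.1 hy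
    by_cases hk : m ≤ (k : ℕ)
    · exact Subgroup.zpow_mem _ (a_mem_H hk) _
    · simp [highPart, hk]

theorem N_tail_mem_H (i j : Fin n) : N n t (tail t i j) ∈ H n t (j + 1) := by
  have : highPart (j + 1) (tail t i j) = tail t i j := by
    ext k
    by_cases h : j < k
    · simp [highPart, tail, h, Nat.succ_le_of_lt (Fin.lt_def.1 h)]
    · simp [highPart, tail, h]
  exact this ▸ N_highPart_mem_H _ _

theorem H_normal (m : ℕ) : (H n t m).Normal := by
  by_cases hm : n ≤ m
  · rw [H_eq_bot hm]
    infer_instance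
  have := H_normal (m + 1)
  rw [← Subgroup.normalizer_eq_top_iff, eq_top_iff, ← PresentedGroup.closure_range_of,
    Subgroup.closure_le]
  rintro _ ⟨p, rfl⟩
  change a n t p ∈ _
  by_cases hp : m ≤ (p : ℕ)
  · exact Subgroup.le_normalizer (a_mem_H hp)
  refine Subgroup.mem_normalizer_closure_of_conj_mem ?_
  rintro _ ⟨k, hk : m ≤ (k : ℕ), rfl⟩
  have hpk : p < k := Fin.lt_def.2 (by omega)
  have htail : N n t (tail t p k) ∈ H n t (m + 1) := H_anti (by omega) (N_tail_mem_H p k)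
  constructor
  · rw [a_mul_a_mul_inv_a hpk]
    exact mul_mem (a_mem_H hk) (H_anti m.le_succ (this.conj_mem _ (inv_mem htail) _))
  · rw [inv_a_mul_a_mul_a hpk]
    exact mul_mem (a_mem_H hk) (H_anti m.le_succ htail)
termination_by n - m

instance (m : ℕ) : (H n t m).Normal := H_normal m

theorem mem_H_iff {m : ℕ} {g : G n t} : g ∈ H n t m ↔ ∃ x, N n t (highPart m x) = g := by
  refine ⟨fun hg => ?_, by rintro ⟨x, rfl⟩; exact N_highPart_mem_H m x⟩
  by_cases hm : n ≤ m
  · rw [H_eq_bot hm, Subgroup.mem_bot] at hg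
    exact ⟨0, by rw [hg, ← N_zero]; congr; ext; simp [highPart]⟩
  let k : Fin n := ⟨m, not_le.1 hm⟩
  rw [show m = k from rfl, H_eq_zpowers_sup] at hg
  obtain ⟨_, hs, _, hh, rfl⟩ := Subgroup.mem_sup_of_normal_right.1 hg
  obtain ⟨s, rfl⟩ := Subgroup.mem_zpowers_iff.1 hs
  obtain ⟨y, rfl⟩ := (mem_H_iff (m := m + 1)).1 hh
  refine ⟨Function.update y k s, ?_⟩
  have hlow : lowPart k (highPart m (Function.update y k s)) = 0 := by
    ext l
    simp only [lowPart, highPart, Pi.zero_apply, k]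
    split_ifs <;> omega
  have hhigh : highPart (k + 1) (highPart m (Function.update y k s)) = highPart (m + 1) y := by
    ext l
    simp only [highPart, Function.update_apply, Fin.ext_iff, k]
    split_ifs <;> omega
  rw [N_eq_lowPart_mul_zpow_mul_highPart k, hlow, hhigh, N_zero, one_mul]
  simp [highPart, k]
termination_by n - m

theorem commute_mk_a (k : Fin n) (g : G n t) :
    Commute (a n t k : G n t ⧸ H n t (k + 1)) g := by
  have : g ∈ (Subgroup.centralizer {(a n t k : G n t ⧸ H n t (k + 1))}).comap
      (QuotientGroup.mk' _) := by
    refine PresentedGroup.generated_by _ _ (fun p => ?_) g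
    rw [Subgroup.mem_comap, QuotientGroup.mk'_apply, Subgroup.mem_centralizer_singleton_iff]
    change ((a n t p : G n t) : G n t ⧸ H n t (k + 1)) * a n t k = a n t k * a n t p
    rcases lt_trichotomy p k with h | rfl | h
    · have := congrArg ((↑) : G n t → G n t ⧸ H n t (k + 1)) (a_mul_a h)
      rw [QuotientGroup.mk_mul, QuotientGroup.mk_mul, QuotientGroup.mk_mul,
        (QuotientGroup.eq_one_iff _).2 (N_tail_mem_H p k), mul_one] at this
      exact this.symm
    · rfl
    · rw [(QuotientGroup.eq_one_iff _).2 (a_mem_H (Fin.lt_def.1 h)), one_mul, mul_one]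
  exact (Subgroup.mem_centralizer_singleton_iff.1 this).symm

theorem exists_a_zpow_mul_eq_mul (k : Fin n) (u : ℤ) (g : G n t) :
    ∃ r, a n t k ^ u * g = g * a n t k ^ u * N n t (highPart (k + 1) r) := by
  have : ((g * a n t k ^ u : G n t) : G n t ⧸ H n t (k + 1)) = ↑(a n t k ^ u * g) := by
    rw [QuotientGroup.mk_mul, QuotientGroup.mk_mul, QuotientGroup.mk_zpow,
      ((commute_mk_a k g).zpow_left u).eq]
  obtain ⟨r, hr⟩ := mem_H_iff.1 (QuotientGroup.eq.1 this)
  exact ⟨r, by rw [hr]; group⟩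

end Filtration

section Consistent

variable {n : ℕ} {t : Fin n → Fin n → Fin n → ℤ}

theorem mk_N (k : Fin n) (x : Fin n → ℤ) :
    (N n t x : G n t ⧸ H n t (k + 1)) = (N n t (lowPart k x) : G n t ⧸ H n t (k + 1)) *
      (a n t k : G n t ⧸ H n t (k + 1)) ^ x k := by
  rw [N_eq_lowPart_mul_zpow_mul_highPart k x, QuotientGroup.mk_mul,
    (QuotientGroup.eq_one_iff _).2 (N_highPart_mem_H _ _), mul_one, QuotientGroup.mk_mul,
    QuotientGroup.mk_zpow]

theorem lowPart_eq_of_mk_N_eq (hN : Function.Injective (N n t)) {m : ℕ} {x y : Fin n → ℤ}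
    (h : (N n t x : G n t ⧸ H n t m) = N n t y) : lowPart m x = lowPart m y := by
  obtain ⟨z, hz⟩ := mem_H_iff.1 (QuotientGroup.eq.1 h)
  obtain ⟨w, hw⟩ := mem_H_iff.1 (mul_mem (N_highPart_mem_H m x) (N_highPart_mem_H m z))
  have : y = lowPart m x + highPart m w := hN <| by
    rw [N_lowPart_add_highPart, hw, ← mul_assoc, ← N_eq_lowPart_mul_highPart, hz]
    group
  rw [this]
  ext k
  simp only [lowPart, highPart, Pi.add_apply]
  split_ifs <;> omega

variable (hN : Function.Bijective (N n t))

noncomputable def rightMul (g : G n t) : Equiv.Perm (Fin n → ℤ) :=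
  (Equiv.ofBijective _ hN).trans ((Equiv.mulRight g).trans (Equiv.ofBijective _ hN).symm)

theorem N_rightMul (g : G n t) (x : Fin n → ℤ) : N n t (rightMul hN g x) = N n t x * g :=
  (Equiv.ofBijective _ hN).apply_symm_apply _

theorem rightMul_mul (g h : G n t) : rightMul hN (g * h) = rightMul hN h * rightMul hN g :=
  Equiv.ext fun x => hN.1 (by simp [N_rightMul, mul_assoc])

theorem rightMul_one : rightMul hN 1 = 1 :=
  Equiv.ext fun x => hN.1 (by simp [N_rightMul])

theorem rightMul_zpow (g : G n t) (s : ℤ) : rightMul hN (g ^ s) = rightMul hN g ^ s := by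
  have inv : rightMul hN g⁻¹ = (rightMul hN g)⁻¹ :=
    eq_inv_of_mul_eq_one_left (by rw [← rightMul_mul, mul_inv_cancel, rightMul_one])
  induction s using Int.induction_on with
  | zero => simpa using rightMul_one hN
  | succ s ih => rw [zpow_add_one, rightMul_mul, ih, add_comm, zpow_one_add]
  | pred s ih => rw [zpow_sub_one, rightMul_mul, ih, inv, sub_eq_neg_add, zpow_add, zpow_neg_one]

theorem rightMul_isUnitriangular (g : G n t) : IsUnitriangular (rightMul hN g) := by
  intro k x y hxy
  -- modulo `H (k + 1)` the generator `a k` is central, so right multiplication by `g` moves the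
  -- exponent of `a k` by an amount that only depends on the coordinates below `k`
  have key (x : Fin n → ℤ) : (N n t (rightMul hN g x - Pi.single k (x k)) : G n t ⧸ H n t (k + 1))
      = N n t (lowPart k x) * g := by
    have hlow : lowPart k (rightMul hN g x - Pi.single k (x k)) = lowPart k (rightMul hN g x) := by
      ext l
      by_cases h : (l : ℕ) < k
      · simp [lowPart, h, Fin.ne_of_lt (Fin.lt_def.2 h)]
      · simp [lowPart, h]
    calc (N n t (rightMul hN g x - Pi.single k (x k)) : G n t ⧸ H n t (k + 1))
        = N n t (lowPart k (rightMul hN g x)) * (a n t k : G n t ⧸ H n t (k + 1)) ^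
            (rightMul hN g x k - x k) := by
          rw [mk_N k, hlow, Pi.sub_apply, Pi.single_eq_same]
      _ = N n t x * g * ((a n t k : G n t ⧸ H n t (k + 1)) ^ x k)⁻¹ := by
          rw [← QuotientGroup.mk_mul, ← N_rightMul hN g x, mk_N k (rightMul hN g x), zpow_sub,
            mul_assoc]
      _ = N n t (lowPart k x) * g := by
          rw [mk_N k x, mul_assoc _ _ (g : G n t ⧸ H n t (k + 1)),
            ((commute_mk_a k g).zpow_left (x k)).eq]
          group
  have hlow : lowPart k x = lowPart k y := by
    ext l
    by_cases h : (l : ℕ) < k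
    · simp [lowPart, h, hxy l (Fin.lt_def.2 h)]
    · simp [lowPart, h]
  have := congrFun (lowPart_eq_of_mk_N_eq hN.1 ((key x).trans (hlow ▸ (key y).symm))) k
  simpa [lowPart] using this

theorem IsPolyMap.rightMul_prodPow {σ : Type*} (h : Fin n → G n t) (p : Fin n → Prop)
    (hh : ∀ k, p k → IsPolyMap (rightMul hN (h k))) {e y : (σ → ℤ) → Fin n → ℤ}
    (he : IsPolyMap e) (he₀ : ∀ z k, ¬ p k → e z k = 0) (hy : IsPolyMap y) :
    IsPolyMap fun z => rightMul hN (prodPow n h (e z)) (y z) := by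
  unfold prodPow
  induction List.finRange n generalizing y with
  | nil => simpa [rightMul_one] using hy
  | cons c L ih =>
    simp only [List.map_cons, List.prod_cons, rightMul_mul, Equiv.Perm.mul_apply, rightMul_zpow]
    refine ih ?_
    by_cases hc : p c
    · exact (hh c hc).zpow_apply (rightMul_isUnitriangular hN _) (he c) hy
    · simpa [he₀ _ c hc] using hy

-- `N x * a_k = (a_1^{x_1} ⋯ a_k^{x_k + 1}) * a_k⁻¹ (a_{k+1}^{x_{k+1}} ⋯ a_n^{x_n}) a_k`
theorem rightMul_a (k : Fin n) (x : Fin n → ℤ) :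
    rightMul hN (a n t k) x =
      rightMul hN (prodPow n (fun l => (a n t k)⁻¹ * a n t l * a n t k) (highPart (k + 1) x))
        (Function.update (lowPart k x) k (x k + 1)) := by
  have hconj : prodPow n (fun l => (a n t k)⁻¹ * a n t l * a n t k) (highPart (k + 1) x)
      = (a n t k)⁻¹ * N n t (highPart (k + 1) x) * a n t k := by
    simpa [N, MulAut.conj_apply] using (map_prodPow (MulAut.conj (a n t k)⁻¹) (a n t) _).symm
  have hlow : lowPart k (Function.update (lowPart k x) k (x k + 1)) = lowPart k x := by
    ext l
    by_cases h : (l : ℕ) < k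
    · simp [lowPart, h, Fin.ne_of_lt (Fin.lt_def.2 h)]
    · simp [lowPart, h]
  have hhigh : highPart (k + 1) (Function.update (lowPart k x) k (x k + 1)) = 0 := by
    ext l
    simp only [highPart, lowPart, Function.update_apply, Pi.zero_apply, Fin.ext_iff]
    split_ifs <;> omega
  apply hN.1
  rw [N_rightMul, N_rightMul, hconj, N_eq_lowPart_mul_zpow_mul_highPart k x,
    N_eq_lowPart_mul_zpow_mul_highPart k (Function.update _ _ _), hlow, hhigh, N_zero]
  simp only [Function.update_self]
  group

theorem isPolyMap_rightMul_a (k : Fin n) : IsPolyMap (rightMul hN (a n t k)) := by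
  induction k using WellFoundedGT.induction with
  | _ k ih =>
  have hconj (l : Fin n) (hkl : k < l) :
      IsPolyMap (rightMul hN ((a n t k)⁻¹ * a n t l * a n t k)) := by
    rw [inv_a_mul_a_mul_a hkl, rightMul_mul, Equiv.Perm.coe_mul]
    refine (IsPolyMap.rightMul_prodPow hN (a n t) (k < ·) ih (isPolyMap_const (tail t k l))
      (fun _ l' hl' => ?_) isPolyMap_id).comp (ih l hkl)
    have : ¬ l < l' := fun h => hl' (hkl.trans h)
    simp [tail, this]
  refine (IsPolyMap.rightMul_prodPow hN _ (k < ·) hconj (isPolyMap_highPart _) (fun x l hl => ?_)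
    (isPolyMap_update_lowPart k)).congr fun x => (rightMul_a hN k x).symm
  have : ¬ (k : ℕ) + 1 ≤ l := fun h => hl (Fin.lt_def.2 h)
  simp [highPart, this]

end Consistent

/-- Conjugation polynomials: if `G(t)` is consistent, then for all `1 ≤ i < j ≤ n` there
exist rational polynomials `R_{i,j,k}` (for `j < k ≤ n`) in two variables `u, v` that take
integer values on integer arguments and satisfy
`a_j^u · a_i^v = a_i^v · a_j^u · a_{j+1}^{R_{i,j,j+1}(u,v)} ⋯ a_n^{R_{i,j,n}(u,v)}`
in `G(t)` for all `u, v ∈ ℤ`. -/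
theorem exists_conjugation_polynomials (n : ℕ) (t : Fin n → Fin n → Fin n → ℤ)
    (hN : Function.Bijective (N n t)) :
    ∀ i j : Fin n, i < j →
      ∃ R : Fin n → MvPolynomial (Fin 2) ℚ,
        ∀ u v : ℤ, ∃ r : Fin n → ℤ,
          (∀ k : Fin n, j < k →
            (r k : ℚ) = MvPolynomial.eval ![(u : ℚ), (v : ℚ)] (R k)) ∧
          a n t j ^ u * a n t i ^ v =
            a n t i ^ v * a n t j ^ u *
              prodPow n (a n t) (fun k => if j < k then r k else 0) := by
  intro i j hij
  let nf : (Fin 2 → ℤ) → Fin n → ℤ :=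
    fun z => (rightMul hN (a n t i) ^ z 1) ((rightMul hN (a n t j) ^ z 0) 0)
  have hnf : IsPolyMap nf :=
    (isPolyMap_rightMul_a hN i).zpow_apply (rightMul_isUnitriangular hN _) (isPolyFun_apply 1)
      ((isPolyMap_rightMul_a hN j).zpow_apply (rightMul_isUnitriangular hN _) (isPolyFun_apply 0)
        (isPolyMap_const 0))
  choose R hR using hnf
  refine ⟨R, fun u v => ⟨nf ![u, v], fun k _ => ?_, ?_⟩⟩
  · have hcast : (Int.cast ∘ ![u, v] : Fin 2 → ℚ) = ![(u : ℚ), (v : ℚ)] := by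
      ext l; fin_cases l <;> rfl
    simpa [hcast] using hR k ![u, v]
  obtain ⟨r, hr⟩ := exists_a_zpow_mul_eq_mul j u (a n t i ^ v)
  have hw : nf ![u, v] = Pi.single i v + Pi.single j u + highPart (j + 1) r := hN.1 <| by
    rw [N_single_add_single_add_highPart hij, ← hr]
    simp [nf, ← rightMul_zpow, N_rightMul, N_zero]
  rw [hr]
  congr 2
  ext k
  simp only [hw, highPart, Pi.add_apply, Pi.single_apply, Fin.lt_def, Fin.ext_iff]
  split_ifs <;> omega

end HallPoly
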